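/- arXiv:1801.01393 — 3 statements merged into one kernel-verified Lean document; each statement's English description precedes it below -/
import Mathlib

section
/- In the blowup construction: let S be a partial Steiner (m, r, r−1)-system, let V be the disjoint union of sets V_1, …, V_m each of size d, and let H be the r-graph on V whose edges are all r-subsets contained in some V_i, together with, for each edge e = {i_1,…,i_r} of S, all transversal r-sets {v_1,…,v_r} with v_j ∈ V_{i_j}. Then Δ_{r−1}(H) = d. -/
/-!
An `(r-1)`-set `T` of an `r`-graph lies in as many edges as there are vertices `v` with
`T ∪ {v}` an edge, so it suffices to show that all such `v` lie in a single part. If `T` sits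
inside part `i`, a transversal edge through `T` would meet at most two parts, which is impossible
for `r ≥ 3`; so `v` lies in part `i`. Otherwise the edge through `T` is transversal, the parts met
by `T` form an `(r-1)`-set of `S`, and the Steiner property fixes the part of `v`. Conversely, if
`T` consists of one vertex in each part of `f ∖ {i}` for an edge `f` of `S`, then every vertex
of part `i` extends `T` to an edge.
-/

open Finset

/-- `H` is an `r`-uniform hypergraph: every edge has `r` vertices. -/
def isUniform (r : ℕ) {V : Type*} [DecidableEq V] (H : Finset (Finset V)) : Prop :=
  ∀ e ∈ H, e.card = r

/-- The degree of a vertex set `S`: the number of edges containing `S`. -/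
def degH {V : Type*} [DecidableEq V] (H : Finset (Finset V)) (S : Finset V) : ℕ :=
  (H.filter fun e => S ⊆ e).card

/-- The maximum `ℓ`-degree `Δ_ℓ(H)`. -/
def maxDeg {V : Type*} [DecidableEq V] [Fintype V] (H : Finset (Finset V)) (ℓ : ℕ) : ℕ :=
  ((univ : Finset V).powersetCard ℓ).sup (degH H)

/-- The minimum `ℓ`-degree `δ_ℓ(H)`. -/
noncomputable def minDeg {V : Type*} [DecidableEq V] (H : Finset (Finset V)) (ℓ : ℕ) : ℕ :=
  sInf {k | ∃ S : Finset V, S.card = ℓ ∧ degH H S = k}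

/-- `I` is an independent set of `H`: it contains no edge. -/
def indep {V : Type*} [DecidableEq V] (H : Finset (Finset V)) (I : Finset V) : Prop :=
  ∀ e ∈ H, ¬ e ⊆ I

/-- The independence number `α(H)`. -/
def alphaH {V : Type*} [DecidableEq V] [Fintype V] (H : Finset (Finset V)) : ℕ :=
  (((univ : Finset V).powerset).filter fun I => ∀ e ∈ H, ¬ e ⊆ I).sup Finset.card

/-- The blowup of an `r`-graph `S` on `[m]` with parts of size `d`: edges are all `r`-subsets
inside a single part together with all transversal `r`-sets over edges of `S`. -/
def blowup (r m d : ℕ) (S : Finset (Finset (Fin m))) : Finset (Finset (Fin m × Fin d)) :=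
  ((univ : Finset (Fin m × Fin d)).powersetCard r).filter
    (fun e => (∃ i : Fin m, ∀ v ∈ e, v.1 = i) ∨ e.image Prod.fst ∈ S)

section Hypergraph

variable {V : Type*} [DecidableEq V]

theorem degH_eq_card_filter_insert_mem [Fintype V] {r : ℕ} {H : Finset (Finset V)}
    (hH : isUniform r H) {T : Finset V} (hT : T.card + 1 = r) :
    degH H T = #{v | v ∉ T ∧ insert v T ∈ H} := by
  symm
  refine card_bij (fun v _ => insert v T) ?_ ?_ ?_
  · intro v hv
    exact mem_filter.2 ⟨(mem_filter.1 hv).2.2, subset_insert v T⟩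
  · intro v hv w _ hvw
    exact (insert_inj (mem_filter.1 hv).2.1).1 hvw
  · intro e he
    obtain ⟨heH, hTe⟩ := mem_filter.1 he
    obtain ⟨v, hvT, rfl⟩ := exists_eq_insert_iff.2 ⟨hTe, by rw [hH e heH, hT]⟩
    exact ⟨v, mem_filter.2 ⟨mem_univ v, hvT, heH⟩, rfl⟩

theorem eq_of_insert_mem_of_insert_mem {r : ℕ} {S : Finset (Finset V)} (hSu : isUniform r S)
    (hSteiner : ∀ T : Finset V, T.card = r - 1 → #{e ∈ S | T ⊆ e} ≤ 1)
    {U : Finset V} (hU : U.card ≤ r - 1) {a b : V} (ha : insert a U ∈ S)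
    (hb : insert b U ∈ S) : a = b := by
  have hcard := hSu _ ha
  have hle := card_insert_le a U
  have hpos : 0 < r := hcard ▸ card_pos.2 (insert_nonempty a U)
  have haU : a ∉ U := fun h => by rw [insert_eq_of_mem h] at hcard; omega
  have hins : insert a U = insert b U :=
    card_le_one.1 (hSteiner U (by omega)) _ (mem_filter.2 ⟨ha, subset_insert a U⟩)
      _ (mem_filter.2 ⟨hb, subset_insert b U⟩)
  exact (insert_inj haU).1 hins

end Hypergraph

theorem card_le_of_forall_fst_eq {α β : Type*} [Fintype β] {s : Finset (α × β)}
    (hs : ∀ v ∈ s, ∀ w ∈ s, v.1 = w.1) : #s ≤ Fintype.card β :=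
  (card_le_card_of_injOn Prod.snd (fun _ _ => mem_coe.2 (mem_univ _))
    fun v hv w hw h => Prod.ext (hs v hv w hw) h).trans_eq (card_univ)

section Blowup

variable {r m d : ℕ} {S : Finset (Finset (Fin m))}

theorem mem_blowup {e : Finset (Fin m × Fin d)} :
    e ∈ blowup r m d S ↔
      e.card = r ∧ ((∃ i : Fin m, ∀ v ∈ e, v.1 = i) ∨ e.image Prod.fst ∈ S) := by
  simp [blowup]

theorem blowup_isUniform : isUniform r (blowup r m d S) :=
  fun _ he => (mem_blowup.1 he).1

theorem fst_eq_of_insert_mem_blowup_of_forall_fst_eq (hr : 3 ≤ r) (hSu : isUniform r S)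
    {T : Finset (Fin m × Fin d)} (hT : T.Nonempty) {i : Fin m} (hTi : ∀ u ∈ T, u.1 = i)
    {v : Fin m × Fin d} (hv : insert v T ∈ blowup r m d S) : v.1 = i := by
  obtain ⟨-, ⟨j, hj⟩ | himS⟩ := mem_blowup.1 hv
  · obtain ⟨u, hu⟩ := hT
    rw [hj v (mem_insert_self v T), ← hj u (mem_insert_of_mem hu), hTi u hu]
  · have hsub : (insert v T).image Prod.fst ⊆ {v.1, i} := by
      intro x hx
      obtain ⟨u, hu, rfl⟩ := mem_image.1 hx
      rcases mem_insert.1 hu with rfl | hu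
      · exact mem_insert_self _ _
      · simp [hTi u hu]
    have := (card_le_card hsub).trans card_le_two
    rw [hSu _ himS] at this
    omega

theorem insert_fst_mem_of_insert_mem_blowup {T : Finset (Fin m × Fin d)}
    (hT : ¬ ∃ i : Fin m, ∀ u ∈ T, u.1 = i) {v : Fin m × Fin d}
    (hv : insert v T ∈ blowup r m d S) : insert v.1 (T.image Prod.fst) ∈ S := by
  obtain ⟨-, ⟨j, hj⟩ | himS⟩ := mem_blowup.1 hv
  · exact absurd ⟨j, fun u hu => hj u (mem_insert_of_mem hu)⟩ hT
  · rwa [image_insert] at himS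

theorem fst_eq_of_insert_mem_blowup (hr : 3 ≤ r) (hSu : isUniform r S)
    (hSteiner : ∀ T : Finset (Fin m), T.card = r - 1 → #{e ∈ S | T ⊆ e} ≤ 1)
    {T : Finset (Fin m × Fin d)} (hT : T.card = r - 1) {v w : Fin m × Fin d}
    (hv : insert v T ∈ blowup r m d S) (hw : insert w T ∈ blowup r m d S) : v.1 = w.1 := by
  by_cases hpart : ∃ i : Fin m, ∀ u ∈ T, u.1 = i
  · obtain ⟨i, hi⟩ := hpart
    have hTne : T.Nonempty := card_pos.1 (by omega)
    rw [fst_eq_of_insert_mem_blowup_of_forall_fst_eq hr hSu hTne hi hv,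
      fst_eq_of_insert_mem_blowup_of_forall_fst_eq hr hSu hTne hi hw]
  · exact eq_of_insert_mem_of_insert_mem hSu hSteiner (card_image_le.trans hT.le)
      (insert_fst_mem_of_insert_mem_blowup hpart hv) (insert_fst_mem_of_insert_mem_blowup hpart hw)

theorem degH_blowup_le (hr : 3 ≤ r) (hSu : isUniform r S)
    (hSteiner : ∀ T : Finset (Fin m), T.card = r - 1 → #{e ∈ S | T ⊆ e} ≤ 1)
    {T : Finset (Fin m × Fin d)} (hT : T.card = r - 1) : degH (blowup r m d S) T ≤ d := by
  rw [degH_eq_card_filter_insert_mem blowup_isUniform (by omega)]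
  refine (card_le_of_forall_fst_eq fun v hv w hw => ?_).trans_eq (Fintype.card_fin d)
  exact fst_eq_of_insert_mem_blowup hr hSu hSteiner hT (mem_filter.1 hv).2.2
    (mem_filter.1 hw).2.2

theorem exists_card_eq_le_degH_blowup (hSu : isUniform r S) {f : Finset (Fin m)} (hf : f ∈ S)
    {i : Fin m} (hi : i ∈ f) (b : Fin d) :
    ∃ T : Finset (Fin m × Fin d), T.card = r - 1 ∧ d ≤ degH (blowup r m d S) T := by
  set T := (f.erase i).image fun a => (a, b)
  have hTcard : T.card + 1 = r := by
    rw [card_image_of_injective _ fun _ _ h => (Prod.mk.inj h).1, card_erase_of_mem hi,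
      ← hSu f hf]
    exact Nat.sub_add_cancel (card_pos.2 ⟨i, hi⟩)
  have hextend : ({i} ×ˢ univ : Finset (Fin m × Fin d)) ⊆
      ({v | v ∉ T ∧ insert v T ∈ blowup r m d S} : Finset (Fin m × Fin d)) := by
    rintro ⟨j, c⟩ hv
    obtain rfl : i = j := by simpa using hv
    have hvT : (i, c) ∉ T := by simp [T]
    refine mem_filter.2 ⟨mem_univ _, hvT, mem_blowup.2 ⟨?_, Or.inr ?_⟩⟩
    · rw [card_insert_of_notMem hvT, hTcard]
    · simpa [T, image_insert, image_image, Function.comp_def, insert_erase hi] using hf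
  refine ⟨T, by omega, ?_⟩
  rw [degH_eq_card_filter_insert_mem blowup_isUniform hTcard]
  simpa using card_le_card hextend

end Blowup

/-- If `S` is a nonempty partial Steiner `(m, r, r−1)`-system, `r ≥ 3` and
`d ≥ r`, then the blowup `H` with parts of size `d` satisfies `Δ_{r−1}(H) = d`. -/
theorem stmt4 {r m d : ℕ} (hr : 3 ≤ r) (hd : r ≤ d)
    (S : Finset (Finset (Fin m))) (hS : S.Nonempty) (hSu : isUniform r S)
    (hSteiner : ∀ T : Finset (Fin m), T.card = r - 1 → (S.filter fun e => T ⊆ e).card ≤ 1) :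
    maxDeg (blowup r m d S) (r - 1) = d := by
  obtain ⟨f, hf⟩ := hS
  obtain ⟨i, hi⟩ : f.Nonempty := card_pos.1 (by rw [hSu f hf]; omega)
  obtain ⟨T, hT, hdT⟩ := exists_card_eq_le_degH_blowup hSu hf hi (⟨0, by omega⟩ : Fin d)
  apply le_antisymm
  · exact Finset.sup_le fun T hT => degH_blowup_le hr hSu hSteiner (mem_powersetCard.1 hT).2
  · exact le_sup_of_le (mem_powersetCard.2 ⟨subset_univ T, hT⟩) hdT
end

section
/- In the blowup construction: let S be a partial Steiner (m, r, r−1)-system, let V be the disjoint union of sets V_1, …, V_m each of size d ≥ r−1, and let H be the r-graph on V whose edges are all r-subsets contained in some V_i, together with all transversal r-sets corresponding to edges of S. Then the independence number satisfies α(H) = (r−1)·α(S). -/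
open Finset

/-
An independent set `I` of the blowup meets each part `V_i` in at most `r - 1`
vertices, and the set of parts it meets is independent in `S`: otherwise picking one vertex of `I`
in each part of an edge of `S` gives a transversal edge inside `I`. Hence `|I| ≤ (r - 1) α(S)`.
Conversely, for an independent set `A` of `S` and any `r - 1` indices `J ⊆ [d]`, the set
`A × J` is independent in the blowup, of size `(r - 1) |A|`.
-/

section IndependenceNumber

variable {V : Type*} [DecidableEq V] [Fintype V] {H : Finset (Finset V)}

theorem card_le_alphaH {I : Finset V} (hI : indep H I) : I.card ≤ alphaH H :=
  le_sup (f := Finset.card) (mem_filter.2 ⟨mem_powerset.2 (subset_univ I), hI⟩)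

theorem alphaH_le {n : ℕ} (h : ∀ I, indep H I → I.card ≤ n) : alphaH H ≤ n :=
  Finset.sup_le fun I hI => h I (mem_filter.1 hI).2

theorem mul_alphaH_le {k n : ℕ} (h : ∀ I, indep H I → k * I.card ≤ n) :
    k * alphaH H ≤ n := by
  rw [alphaH, apply_sup_eq_sup_comp_of_linearOrder (k * ·)
    (fun _ _ hab => Nat.mul_le_mul_left k hab) (Nat.mul_zero k)]
  exact Finset.sup_le fun I hI => h I (mem_filter.1 hI).2

end IndependenceNumber

section Blowup

variable {r m d : ℕ} {S : Finset (Finset (Fin m))}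

theorem mem_blowup_of_subset_part {e : Finset (Fin m × Fin d)} (he : e.card = r) (i : Fin m)
    (hi : ∀ v ∈ e, v.1 = i) : e ∈ blowup r m d S :=
  mem_filter.2 ⟨mem_powersetCard.2 ⟨subset_univ e, he⟩, Or.inl ⟨i, hi⟩⟩

theorem mem_blowup_of_image_fst_mem {e : Finset (Fin m × Fin d)} (he : e.card = r)
    (hS : e.image Prod.fst ∈ S) : e ∈ blowup r m d S :=
  mem_filter.2 ⟨mem_powersetCard.2 ⟨subset_univ e, he⟩, Or.inr hS⟩

theorem card_filter_fst_eq_le_of_indep_blowup {I : Finset (Fin m × Fin d)}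
    (hI : indep (blowup r m d S) I) (i : Fin m) : (I.filter fun v => v.1 = i).card ≤ r - 1 := by
  by_contra! h
  obtain ⟨e, he, hecard⟩ :=
    exists_subset_card_eq (show r ≤ (I.filter fun v => v.1 = i).card by omega)
  exact hI e (mem_blowup_of_subset_part hecard i fun v hv => (mem_filter.1 (he hv)).2)
    (he.trans (filter_subset _ _))

theorem indep_image_fst_of_indep_blowup (hSu : isUniform r S) {I : Finset (Fin m × Fin d)}
    (hI : indep (blowup r m d S) I) : indep S (I.image Prod.fst) := by
  intro e heS heI
  obtain ⟨T, hTI, hTinj, hTe⟩ := exists_subset_injOn_image_eq_of_surjOn (f := Prod.fst)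
    (I : Set (Fin m × Fin d)) e (by rw [Set.SurjOn, ← coe_image]; exact_mod_cast heI)
  have hTcard : T.card = r := by rw [← hSu e heS, ← hTe, card_image_of_injOn hTinj]
  exact hI T (mem_blowup_of_image_fst_mem hTcard (hTe ▸ heS)) (by exact_mod_cast hTI)

theorem card_le_mul_alphaH_of_indep_blowup (hSu : isUniform r S) {I : Finset (Fin m × Fin d)}
    (hI : indep (blowup r m d S) I) : I.card ≤ (r - 1) * alphaH S :=
  calc I.card = ∑ i ∈ I.image Prod.fst, (I.filter fun v => v.1 = i).card :=
        card_eq_sum_card_image Prod.fst I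
    _ ≤ ∑ _i ∈ I.image Prod.fst, (r - 1) :=
        sum_le_sum fun i _ => card_filter_fst_eq_le_of_indep_blowup hI i
    _ = (r - 1) * (I.image Prod.fst).card := by rw [sum_const, smul_eq_mul, mul_comm]
    _ ≤ (r - 1) * alphaH S :=
        Nat.mul_le_mul_left _ (card_le_alphaH (indep_image_fst_of_indep_blowup hSu hI))

theorem indep_blowup_product (hr : 1 ≤ r) {A : Finset (Fin m)} (hA : indep S A)
    {J : Finset (Fin d)} (hJ : J.card = r - 1) : indep (blowup r m d S) (A ×ˢ J) := by
  intro e he heAJ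
  obtain ⟨⟨-, hecard⟩, ⟨i, hi⟩ | hS⟩ := mem_filter.1 he |>.imp_left mem_powersetCard.1
  · have hsnd : (e.image Prod.snd).card = e.card :=
      card_image_of_injOn fun a ha b hb hab => Prod.ext ((hi a ha).trans (hi b hb).symm) hab
    have hsndJ : e.image Prod.snd ⊆ J :=
      image_subset_iff.2 fun v hv => (mem_product.1 (heAJ hv)).2
    have := card_le_card hsndJ
    omega
  · exact hA _ hS (image_subset_iff.2 fun v hv => (mem_product.1 (heAJ hv)).1)

end Blowup

theorem stmt5_general {r m d : ℕ} (hr : 3 ≤ r) (hd : r - 1 ≤ d)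
    (S : Finset (Finset (Fin m))) (hSu : isUniform r S) :
    alphaH (blowup r m d S) = (r - 1) * alphaH S := by
  refine le_antisymm (alphaH_le fun I hI => card_le_mul_alphaH_of_indep_blowup hSu hI)
    (mul_alphaH_le fun A hA => ?_)
  obtain ⟨J, -, hJ⟩ :=
    exists_subset_card_eq (show r - 1 ≤ (univ : Finset (Fin d)).card by simpa using hd)
  calc (r - 1) * A.card = (A ×ˢ J).card := by rw [card_product, hJ, mul_comm]
    _ ≤ alphaH (blowup r m d S) := card_le_alphaH (indep_blowup_product (by omega) hA hJ)

/-- If `S` is a partial Steiner `(m, r, r−1)`-system, `r ≥ 3` and `d ≥ r−1`,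
then the blowup `H` with parts of size `d` satisfies `α(H) = (r−1)·α(S)`. -/
theorem stmt5 {r m d : ℕ} (hr : 3 ≤ r) (hd : r - 1 ≤ d)
    (S : Finset (Finset (Fin m))) (hSu : isUniform r S)
    (hSteiner : ∀ T : Finset (Fin m), T.card = r - 1 → (S.filter fun e => T ⊆ e).card ≤ 1) :
    alphaH (blowup r m d S) = (r - 1) * alphaH S :=
  stmt5_general hr hd S hSu
end

section
/- Let r ≥ 2 and ε > 0, and suppose m is a positive integer with m ≥ 2(r−1)/ε and C(m, r−1)·e^{−ε²(m−r+1)/12} ≤ 1/2. Then every r-graph H on n ≥ m vertices contains an induced sub-r-graph H' on m vertices with Δ_{r−1}(H')/m ≤ Δ_{r−1}(H)/n + ε. -/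
open Finset

/-!
Fix an `(r-1)`-set `S` and a uniformly random `m`-set `W ⊇ S`. The degree of `S` in `H[W]` is
`|W ∩ L|`, where `L` is the link of `S`: a hypergeometric variable with mean
`(m-r+1)·deg(S)/(n-r+1) ≤ m·Δ/n`. Its exponential moments `E[(1+ε)^{|W ∩ L|}]` are at most those
of the binomial variable with the same mean (by induction on `L`, each step being a weighted AM-GM
inequality), so Markov's inequality gives the Chernoff bound `exp(-ε²(m-r+1)/12)` for the event
that the degree exceeds `(Δ/n + ε)·m`. Counting pairs `(S, W)`, the hypothesis
`C(m, r-1)·exp(-ε²(m-r+1)/12) ≤ 1/2` leaves fewer bad pairs than `m`-sets, so some `W` is good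
for every `S`. If `Δ/n + ε ≥ 1` there is nothing to prove, as degrees in `H[W]` are at most `m`.
-/

theorem pow_mul_le_add_div_pow {x y : ℝ} (hx : 0 < x) (hy : 0 ≤ y) (m : ℕ) :
    x ^ m * y ≤ ((m * x + y) / (m + 1)) ^ (m + 1) := by
  set t := (y - x) / ((m + 1) * x)
  have ht : -2 ≤ t := by
    rw [le_div_iff₀ (by positivity)]
    nlinarith
  have hmean : (m * x + y) / (m + 1) = x * (1 + t) := by
    simp only [t]
    field_simp
    ring
  calc x ^ m * y = x ^ (m + 1) * (1 + (m + 1 : ℕ) * t) := by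
        simp only [t]
        push_cast
        field_simp
        ring
    _ ≤ x ^ (m + 1) * (1 + t) ^ (m + 1) := by gcongr; exact one_add_mul_le_pow ht _
    _ = ((m * x + y) / (m + 1)) ^ (m + 1) := by rw [hmean, mul_pow]

theorem add_sq_div_twelve_le_mul_log {ε : ℝ} (h0 : 0 ≤ ε) (h1 : ε ≤ 10) :
    ε + ε ^ 2 / 12 ≤ (1 + ε) * Real.log (1 + ε) := by
  have hlog := Real.le_log_one_add_of_nonneg h0
  rw [div_le_iff₀ (by positivity)] at hlog
  nlinarith [mul_nonneg h0 h0, mul_nonneg (mul_nonneg h0 h0) (sub_nonneg.2 h1)]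

theorem choose_mul_pow_add_le_succ_choose_mul_pow {N D : ℕ} (hDN : D ≤ N) {a : ℝ} (ha : 0 ≤ a)
    (m : ℕ) :
    (N.choose (m + 1) : ℝ) * (1 + D / N * a) ^ (m + 1) +
        (1 + a) * ((N.choose m : ℝ) * (1 + D / N * a) ^ m) ≤
      ((N + 1).choose (m + 1) : ℝ) * (1 + (D + 1) / (N + 1) * a) ^ (m + 1) := by
  set x : ℝ := 1 + D / N * a
  set C : ℝ := ((N + 1).choose (m + 1) : ℝ)
  have hx : 0 < x := by positivity
  -- holds also for `N = 0`, where `D = 0` and `D / N = 0`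
  have hNx : N * x = N + D * a := by
    rcases N.eq_zero_or_pos with rfl | hN
    · simp [Nat.le_zero.1 hDN]
    · simp only [x]
      field_simp
  have hpascal : (N.choose (m + 1) : ℝ) = C - N.choose m := by
    simp only [C]
    rw [Nat.choose_succ_succ']
    push_cast
    ring
  have hrow : ((N : ℝ) + 1) * N.choose m = C * (m + 1) := by
    simp only [C]
    exact_mod_cast Nat.add_one_mul_choose_eq N m
  clear_value x
  rcases le_or_gt (m + 1) (N + 1) with hmN | hmN
  · set q : ℝ := (m + 1) / (N + 1)
    have hq : q ≤ 1 := div_le_one_of_le₀ (by exact_mod_cast hmN) (by positivity)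
    have hchoose : (N.choose m : ℝ) = C * q := by
      simp only [q]
      field_simp
      linear_combination hrow
    set y := (1 - q) * x + q * (1 + a)
    have hy : 0 ≤ y := by
      have : 0 ≤ q := by positivity
      nlinarith
    have hmean : (m * x + y) / (m + 1) = 1 + (D + 1) / (N + 1) * a := by
      simp only [y, q]
      field_simp
      linear_combination ((m : ℝ) + 1) * hNx
    calc (N.choose (m + 1) : ℝ) * x ^ (m + 1) + (1 + a) * ((N.choose m : ℝ) * x ^ m)
        = C * (x ^ m * y) := by rw [hpascal, hchoose, pow_succ]; ring
      _ ≤ C * ((m * x + y) / (m + 1)) ^ (m + 1) := by gcongr; exact pow_mul_le_add_div_pow hx hy m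
      _ = C * (1 + (D + 1) / (N + 1) * a) ^ (m + 1) := by rw [hmean]
  · simp [C, Nat.choose_eq_zero_of_lt hmN, Nat.choose_eq_zero_of_lt (by omega : N < m),
      Nat.choose_eq_zero_of_lt (by omega : N < m + 1)]

section Hypergeometric

variable {α : Type*} [DecidableEq α]

theorem sum_pow_card_inter_le {a : ℝ} (ha : 0 ≤ a) {L A : Finset α} (hLA : L ⊆ A) (m : ℕ) :
    ∑ W ∈ A.powersetCard m, (1 + a) ^ #(W ∩ L) ≤ ((#A).choose m : ℝ) * (1 + #L / #A * a) ^ m := by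
  induction L using Finset.induction_on generalizing A m with
  | empty => simp
  | insert v L hvL ih =>
    obtain ⟨hvA, hLA⟩ := insert_subset_iff.1 hLA
    cases m with
    | zero => simp
    | succ m =>
      set A' := A.erase v
      have hvA' : v ∉ A' := notMem_erase v A
      have hLA' : L ⊆ A' := fun u hu => mem_erase.2 ⟨fun h => hvL (h ▸ hu), hLA hu⟩
      have hvW : ∀ W ∈ A'.powersetCard m, v ∉ W := fun W hW h => hvA' ((mem_powersetCard.1 hW).1 h)
      have hdisj : Disjoint (A'.powersetCard (m + 1)) ((A'.powersetCard m).image (insert v)) := by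
        refine disjoint_right.2 fun W hW hW' => ?_
        obtain ⟨U, -, rfl⟩ := mem_image.1 hW
        exact hvA' ((mem_powersetCard.1 hW').1 (mem_insert_self v U))
      have hinj : Set.InjOn (insert v) (A'.powersetCard m : Set (Finset α)) :=
        fun W₁ h₁ W₂ h₂ h => by
          rw [← erase_insert (hvW W₁ h₁), ← erase_insert (hvW W₂ h₂)]
          exact congrArg (·.erase v) h
      calc ∑ W ∈ A.powersetCard (m + 1), (1 + a) ^ #(W ∩ insert v L)
          = ∑ W ∈ A'.powersetCard (m + 1), (1 + a) ^ #(W ∩ L) +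
              (1 + a) * ∑ W ∈ A'.powersetCard m, (1 + a) ^ #(W ∩ L) := by
            rw [← insert_erase hvA, powersetCard_succ_insert hvA', sum_union hdisj,
              sum_image hinj, mul_sum]
            congr 1
            · refine sum_congr rfl fun W hW => ?_
              rw [inter_insert_of_notMem fun h => hvA' ((mem_powersetCard.1 hW).1 h)]
            · refine sum_congr rfl fun W hW => ?_
              rw [← insert_inter_distrib,
                card_insert_of_notMem fun h => hvW W hW (mem_inter.1 h).1, pow_succ']
        _ ≤ ((#A').choose (m + 1) : ℝ) * (1 + #L / #A' * a) ^ (m + 1) +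
              (1 + a) * (((#A').choose m : ℝ) * (1 + #L / #A' * a) ^ m) := by
            gcongr
            exacts [ih hLA' (m + 1), ih hLA' m]
        _ ≤ ((#A).choose (m + 1) : ℝ) * (1 + #(insert v L) / #A * a) ^ (m + 1) := by
            rw [← insert_erase hvA, card_insert_of_notMem hvA', card_insert_of_notMem hvL]
            push_cast
            exact choose_mul_pow_add_le_succ_choose_mul_pow (card_le_card hLA') ha m

theorem card_filter_lt_card_inter_le {L A : Finset α} (hLA : L ⊆ A) (m : ℕ) {ε τ : ℝ}
    (hε0 : 0 ≤ ε) (hε1 : ε ≤ 10) (hτ : (#L / #A + ε) * m ≤ τ) :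
    (#{W ∈ A.powersetCard m | τ < #(W ∩ L)} : ℝ) ≤
      (#A).choose m * Real.exp (-ε ^ 2 * m / 12) := by
  set p : ℝ := #L / #A
  set c := Real.log (1 + ε)
  have hp1 : p ≤ 1 := div_le_one_of_le₀ (by exact_mod_cast card_le_card hLA) (by positivity)
  have hc0 : 0 ≤ c := Real.log_nonneg (by linarith)
  have hcε : c ≤ ε := by linarith [Real.log_le_sub_one_of_pos (x := 1 + ε) (by linarith)]
  have hpow : ∀ j : ℕ, (1 + ε) ^ j = Real.exp (c * j) := fun j => by
    rw [mul_comm, Real.exp_nat_mul, Real.exp_log (by linarith)]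
  have hmarkov : (#{W ∈ A.powersetCard m | τ < #(W ∩ L)} : ℝ) * Real.exp (c * τ) ≤
      ∑ W ∈ A.powersetCard m, (1 + ε) ^ #(W ∩ L) := by
    rw [← nsmul_eq_mul]
    refine (card_nsmul_le_sum _ _ _ fun W hW => ?_).trans
      (sum_le_sum_of_subset_of_nonneg (filter_subset _ _) fun _ _ _ => by positivity)
    rw [hpow]
    exact Real.exp_le_exp.2 (mul_le_mul_of_nonneg_left (mem_filter.1 hW).2.le hc0)
  -- `p ε - (p + ε) c ≤ ε - (1 + ε) c ≤ -ε² / 12`, using `p ≤ 1` and `c ≤ ε`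
  have hexponent : p * ε * m ≤ -ε ^ 2 * m / 12 + c * τ := by
    have hlog := add_sq_div_twelve_le_mul_log hε0 hε1
    have hm : (0 : ℝ) ≤ m := m.cast_nonneg
    nlinarith [mul_le_mul_of_nonneg_left hτ hc0, mul_nonneg (sub_nonneg.2 hp1) (sub_nonneg.2 hcε)]
  refine le_of_mul_le_mul_right ?_ (Real.exp_pos (c * τ))
  calc (#{W ∈ A.powersetCard m | τ < #(W ∩ L)} : ℝ) * Real.exp (c * τ)
      ≤ (#A).choose m * (1 + p * ε) ^ m := hmarkov.trans (sum_pow_card_inter_le hε0 hLA m)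
    _ ≤ (#A).choose m * Real.exp (p * ε * m) := by
        rw [mul_comm _ (m : ℝ), Real.exp_nat_mul]
        gcongr
        linarith [Real.add_one_le_exp (p * ε)]
    _ ≤ (#A).choose m * Real.exp (-ε ^ 2 * m / 12 + c * τ) := by gcongr
    _ = (#A).choose m * Real.exp (-ε ^ 2 * m / 12) * Real.exp (c * τ) := by
        rw [Real.exp_add, mul_assoc]

end Hypergeometric

theorem exists_forall_not_of_sum_card_filter_lt {ι κ : Type*} {T : Finset ι} {P : Finset κ}
    (R : ι → κ → Prop) [∀ i j, Decidable (R i j)] (h : ∑ i ∈ T, #{W ∈ P | R i W} < #P) :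
    ∃ W ∈ P, ∀ i ∈ T, ¬ R i W := by
  have hsum : ∑ W ∈ P, #{i ∈ T | R i W} < ∑ _W ∈ P, 1 :=
    calc ∑ W ∈ P, #{i ∈ T | R i W} = ∑ i ∈ T, #{W ∈ P | R i W} :=
          (sum_card_bipartiteAbove_eq_sum_card_bipartiteBelow R).symm
      _ < #P := h
      _ = ∑ _W ∈ P, 1 := card_eq_sum_ones P
  obtain ⟨W, hW, hlt⟩ := exists_lt_of_sum_lt hsum
  exact ⟨W, hW, fun i hi hR => (filter_eq_empty_iff.1 (card_eq_zero.1 (Nat.lt_one_iff.1 hlt)))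
    hi hR⟩

theorem div_sub_add_mul_sub_le {d D k m n ε : ℝ} (hd : 0 ≤ d) (hdD : d ≤ D) (hε : 0 ≤ ε)
    (hk : 0 ≤ k) (hkm : k ≤ m) (hmn : m ≤ n) :
    (d / (n - k) + ε) * (m - k) ≤ (D / n + ε) * m := by
  rcases hkm.trans hmn |>.eq_or_lt with hkn | hkn
  · have : m = k := by linarith
    subst this hkn
    simp only [sub_self, mul_zero]
    have := hd.trans hdD
    positivity
  have hfrac : (m - k) / (n - k) ≤ m / n := by
    rw [div_le_div_iff₀ (by linarith) (by linarith)]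
    nlinarith
  have hmain : d * ((m - k) / (n - k)) ≤ D * (m / n) :=
    mul_le_mul hdD hfrac (div_nonneg (by linarith) (by linarith)) (hd.trans hdD)
  calc (d / (n - k) + ε) * (m - k) = d * ((m - k) / (n - k)) + ε * (m - k) := by ring
    _ ≤ D * (m / n) + ε * m := by nlinarith
    _ = (D / n + ε) * m := by ring

section Hypergraph

variable {V : Type*} [DecidableEq V]

def link [Fintype V] (H : Finset (Finset V)) (S : Finset V) : Finset V :=
  {v | v ∉ S ∧ insert v S ∈ H}

theorem disjoint_link [Fintype V] (H : Finset (Finset V)) (S : Finset V) :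
    Disjoint S (link H S) :=
  disjoint_right.2 fun _ hv => (mem_filter.1 hv).2.1

theorem degH_filter_subset_of_not_subset {H : Finset (Finset V)} {S W : Finset V}
    (hSW : ¬ S ⊆ W) : degH (H.filter fun e => e ⊆ W) S = 0 :=
  card_eq_zero.2 <| filter_eq_empty_iff.2 fun _ he hSe => hSW (hSe.trans (mem_filter.1 he).2)

theorem degH_filter_subset_eq_card_inter_link [Fintype V] {k : ℕ} {H : Finset (Finset V)}
    (hH : isUniform (k + 1) H) {S W : Finset V} (hS : #S = k) (hSW : S ⊆ W) :
    degH (H.filter fun e => e ⊆ W) S = #(W ∩ link H S) := by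
  rw [degH, filter_filter]
  refine (card_nbij (fun v => insert v S) (fun v hv => ?_) (fun v hv w _ hvw => ?_)
    fun e he => ?_).symm
  · obtain ⟨hvW, hv⟩ := mem_inter.1 hv
    obtain ⟨-, hvS, hvH⟩ := mem_filter.1 hv
    exact mem_filter.2 ⟨hvH, insert_subset hvW hSW, subset_insert v S⟩
  · exact (insert_inj (mem_filter.1 (mem_inter.1 hv).2).2.1).1 hvw
  · obtain ⟨heH, heW, hSe⟩ := mem_filter.1 (mem_coe.1 he)
    obtain ⟨v, hv⟩ := card_eq_one.1 <| by
      rw [card_sdiff_of_subset hSe, hH e heH, hS, Nat.add_sub_cancel_left]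
    have hve : v ∈ e \ S := hv ▸ mem_singleton_self v
    have he : insert v S = e := by rw [← sdiff_union_of_subset hSe, hv, insert_eq]
    refine ⟨v, mem_inter.2 ⟨heW (mem_sdiff.1 hve).1, ?_⟩, he⟩
    exact mem_filter.2 ⟨mem_univ v, (mem_sdiff.1 hve).2, he ▸ heH⟩

theorem degH_eq_card_link [Fintype V] {k : ℕ} {H : Finset (Finset V)} (hH : isUniform (k + 1) H)
    {S : Finset V} (hS : #S = k) : degH H S = #(link H S) := by
  simpa using degH_filter_subset_eq_card_inter_link hH hS (subset_univ S)

theorem degH_filter_subset_le_card [Fintype V] {k : ℕ} {H : Finset (Finset V)}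
    (hH : isUniform (k + 1) H) {S : Finset V} (hS : #S = k) (W : Finset V) :
    degH (H.filter fun e => e ⊆ W) S ≤ #W := by
  by_cases hSW : S ⊆ W
  · rw [degH_filter_subset_eq_card_inter_link hH hS hSW]
    exact card_le_card inter_subset_left
  · rw [degH_filter_subset_of_not_subset hSW]
    exact Nat.zero_le _

theorem exists_card_eq_maxDeg_filter_subset_le_card [Fintype V] {k m : ℕ}
    (hmV : m ≤ Fintype.card V) {H : Finset (Finset V)} (hH : isUniform (k + 1) H) :
    ∃ W : Finset V, #W = m ∧ maxDeg (H.filter fun e => e ⊆ W) k ≤ m := by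
  obtain ⟨W, -, hW⟩ := exists_subset_card_eq (s := (univ : Finset V)) (by simpa using hmV)
  exact ⟨W, hW, Finset.sup_le fun S hS =>
    hW ▸ degH_filter_subset_le_card hH (mem_powersetCard.1 hS).2 W⟩

theorem degH_le_maxDeg [Fintype V] (H : Finset (Finset V)) {S : Finset V} {k : ℕ} (hS : #S = k) :
    degH H S ≤ maxDeg H k :=
  le_sup (mem_powersetCard.2 ⟨subset_univ S, hS⟩)

theorem cast_maxDeg_le [Fintype V] {H : Finset (Finset V)} {k : ℕ} {τ : ℝ} (hτ : 0 ≤ τ)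
    (h : ∀ S : Finset V, #S = k → (degH H S : ℝ) ≤ τ) : (maxDeg H k : ℝ) ≤ τ :=
  (Nat.cast_le.2 (Finset.sup_le fun S hS => Nat.le_floor (h S (mem_powersetCard.1 hS).2))).trans
    (Nat.floor_le hτ)

theorem card_superset_filter_lt_card_inter_le [Fintype V] {S L : Finset V} (hSL : Disjoint S L)
    (m : ℕ) {ε τ : ℝ} (hε0 : 0 ≤ ε) (hε1 : ε ≤ 10)
    (hτ : (#L / (Fintype.card V - #S : ℕ) + ε) * (m - #S : ℕ) ≤ τ) :
    (#{W ∈ (univ : Finset V).powersetCard m | S ⊆ W ∧ τ < #(W ∩ L)} : ℝ) ≤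
      (Fintype.card V - #S).choose (m - #S) * Real.exp (-ε ^ 2 * (m - #S : ℕ) / 12) := by
  have hLS : L ⊆ Sᶜ := fun v hv => mem_compl.2 (disjoint_right.1 hSL hv)
  have htail := card_filter_lt_card_inter_le (τ := τ) hLS (m - #S) hε0 hε1 (by rwa [card_compl])
  rw [card_compl] at htail
  refine le_trans (Nat.cast_le.2 ?_) htail
  refine card_le_card_of_injOn (· \ S) (fun W hW => ?_) fun W₁ h₁ W₂ h₂ h => ?_
  · obtain ⟨hW, hSW, hτW⟩ := mem_filter.1 (mem_coe.1 hW)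
    refine mem_filter.2 ⟨mem_powersetCard.2 ⟨fun v hv => mem_compl.2 (mem_sdiff.1 hv).2, ?_⟩, ?_⟩
    · rw [card_sdiff_of_subset hSW, (mem_powersetCard.1 hW).2]
    · rwa [sdiff_inter_right_comm,
        sdiff_eq_self_of_disjoint (hSL.symm.mono_left inter_subset_right)]
  · rw [← sdiff_union_of_subset (mem_filter.1 (mem_coe.1 h₁)).2.1,
      ← sdiff_union_of_subset (mem_filter.1 (mem_coe.1 h₂)).2.1]
    exact congrArg (· ∪ S) h

theorem exists_card_eq_maxDeg_filter_subset_le [Fintype V] {k m : ℕ} {ε : ℝ} (hε0 : 0 ≤ ε)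
    (hε1 : ε ≤ 10) (hkm : k ≤ m) (hmV : m ≤ Fintype.card V)
    (hE : (m.choose k : ℝ) * Real.exp (-ε ^ 2 * (m - k : ℕ) / 12) ≤ 1 / 2)
    {H : Finset (Finset V)} (hH : isUniform (k + 1) H) :
    ∃ W : Finset V, #W = m ∧
      (maxDeg (H.filter fun e => e ⊆ W) k : ℝ) ≤ ((maxDeg H k : ℝ) / Fintype.card V + ε) * m := by
  set n := Fintype.card V
  set τ := ((maxDeg H k : ℝ) / n + ε) * m
  set E := Real.exp (-ε ^ 2 * (m - k : ℕ) / 12)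
  have hbad : ∀ S ∈ (univ : Finset V).powersetCard k,
      (#{W ∈ (univ : Finset V).powersetCard m | S ⊆ W ∧ τ < #(W ∩ link H S)} : ℝ) ≤
        (n - k).choose (m - k) * E := by
    intro S hS
    obtain hSk := (mem_powersetCard.1 hS).2
    subst hSk
    refine card_superset_filter_lt_card_inter_le (disjoint_link H S) m hε0 hε1 ?_
    rw [Nat.cast_sub hkm, Nat.cast_sub (hkm.trans hmV)]
    refine div_sub_add_mul_sub_le (Nat.cast_nonneg _) ?_ hε0 (Nat.cast_nonneg _)
      (by exact_mod_cast hkm) (by exact_mod_cast hmV)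
    rw [← degH_eq_card_link hH rfl]
    exact_mod_cast degH_le_maxDeg H rfl
  have hsum : ∑ S ∈ (univ : Finset V).powersetCard k,
      #{W ∈ (univ : Finset V).powersetCard m | S ⊆ W ∧ τ < #(W ∩ link H S)} <
        #((univ : Finset V).powersetCard m) := by
    have hpos : (0 : ℝ) < n.choose m := by exact_mod_cast Nat.choose_pos hmV
    have hprod : (n.choose k : ℝ) * (n - k).choose (m - k) = n.choose m * m.choose k := by
      exact_mod_cast (Nat.choose_mul hkm).symm
    rw [card_powersetCard, card_univ, ← Nat.cast_lt (α := ℝ), Nat.cast_sum]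
    calc _ ≤ ∑ _S ∈ (univ : Finset V).powersetCard k, ((n - k).choose (m - k) * E : ℝ) :=
          sum_le_sum hbad
      _ = n.choose m * (m.choose k * E) := by
          rw [sum_const, card_powersetCard, card_univ, nsmul_eq_mul, ← mul_assoc, hprod, mul_assoc]
      _ < n.choose m := by nlinarith
  obtain ⟨W, hW, hgood⟩ := exists_forall_not_of_sum_card_filter_lt _ hsum
  refine ⟨W, (mem_powersetCard.1 hW).2, cast_maxDeg_le (by positivity) fun S hS => ?_⟩
  by_cases hSW : S ⊆ W
  · rw [degH_filter_subset_eq_card_inter_link hH hS hSW]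
    exact not_lt.1 fun h => hgood S (mem_powersetCard.2 ⟨subset_univ S, hS⟩) ⟨hSW, h⟩
  · rw [degH_filter_subset_of_not_subset hSW, Nat.cast_zero]
    positivity

end Hypergraph

theorem stmt9_general {r : ℕ} (hr : 2 ≤ r) (ε : ℝ) (hε : 0 < ε) (m : ℕ)
    (h1 : 2 * ((r : ℝ) - 1) / ε ≤ (m : ℝ))
    (h2 : (m.choose (r - 1) : ℝ) * Real.exp (-ε^2 * ((m : ℝ) - r + 1) / 12) ≤ 1/2)
    {n : ℕ} (hnm : m ≤ n) (H : Finset (Finset (Fin n))) (hH : isUniform r H) :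
    ∃ W : Finset (Fin n), W.card = m ∧
      (maxDeg (H.filter fun e => e ⊆ W) (r - 1) : ℝ) / m ≤
        (maxDeg H (r - 1) : ℝ) / n + ε := by
  obtain ⟨k, rfl⟩ : ∃ k, r = k + 1 := ⟨r - 1, by omega⟩
  rw [Nat.add_sub_cancel] at h2 ⊢
  push_cast at h1 h2
  have hρ : 0 ≤ (maxDeg H k : ℝ) / n + ε := by positivity
  rcases le_or_gt 1 ((maxDeg H k : ℝ) / n + ε) with hbig | hsmall
  · obtain ⟨W, hW, hdeg⟩ := exists_card_eq_maxDeg_filter_subset_le_card (by simpa using hnm) hH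
    exact ⟨W, hW, div_le_of_le_mul₀ m.cast_nonneg hρ
      ((Nat.cast_le.2 hdeg).trans (le_mul_of_one_le_left m.cast_nonneg hbig))⟩
  · have hε1 : ε < 1 := by linarith [show 0 ≤ (maxDeg H k : ℝ) / n by positivity]
    have hkm : k ≤ m := by
      have hk : (k : ℝ) ≤ 2 * k / ε := by
        rw [le_div_iff₀ hε]
        nlinarith [k.cast_nonneg (α := ℝ)]
      have h1' : 2 * (k : ℝ) / ε ≤ m := by simpa using h1
      exact_mod_cast hk.trans h1'
    have hE : (m.choose k : ℝ) * Real.exp (-ε ^ 2 * (m - k : ℕ) / 12) ≤ 1 / 2 := by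
      convert h2 using 4
      push_cast [Nat.cast_sub hkm]
      ring
    obtain ⟨W, hW, hdeg⟩ :=
      exists_card_eq_maxDeg_filter_subset_le hε.le (by linarith) hkm (by simpa using hnm) hE hH
    exact ⟨W, hW, div_le_of_le_mul₀ m.cast_nonneg hρ (by simpa using hdeg)⟩

/-- **Mubayi–Zhao lemma.** Let `r ≥ 2`, `ε > 0` and `m ≥ 2(r−1)/ε` with
`C(m, r−1)·e^{−ε²(m−r+1)/12} ≤ 1/2`. Then every `r`-graph `H` on `n ≥ m` vertices has an
induced sub-`r`-graph `H'` on `m` vertices with `Δ_{r−1}(H')/m ≤ Δ_{r−1}(H)/n + ε`. -/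
theorem stmt9 {r : ℕ} (hr : 2 ≤ r) (ε : ℝ) (hε : 0 < ε) (m : ℕ) (hm : 0 < m)
    (h1 : 2 * ((r : ℝ) - 1) / ε ≤ (m : ℝ))
    (h2 : (m.choose (r - 1) : ℝ) * Real.exp (-ε^2 * ((m : ℝ) - r + 1) / 12) ≤ 1/2)
    {n : ℕ} (hnm : m ≤ n) (H : Finset (Finset (Fin n))) (hH : isUniform r H) :
    ∃ W : Finset (Fin n), W.card = m ∧
      (maxDeg (H.filter fun e => e ⊆ W) (r - 1) : ℝ) / m ≤
        (maxDeg H (r - 1) : ℝ) / n + ε :=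
  stmt9_general hr ε hε m h1 h2 hnm H hH
end
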